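/- arXiv:1812.03883 — 3 statements merged into one kernel-verified Lean document; each statement's English description precedes it below -/
import Mathlib

section
/- The set of complex Hermitian positive semidefinite 2×2 matrices of trace 1 is homeomorphic to the closed unit ball in ℝ³, i.e. there is a homeomorphism between {A : 2×2 complex matrix | A is Hermitian, A is positive semidefinite, tr A = 1} (with the subspace topology from the space of 2×2 complex matrices) and the closed unit ball in the Euclidean space ℝ³. -/
/-!
Writing `p = (x, y, z)`, the Bloch parametrization
`p ↦ ½ [[1 + z, x + i y], [x - i y, 1 - z]]` is an affine bijection from `ℝ³` onto the Hermitian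
`2 × 2` matrices of trace `1`, continuous in both directions. Such a matrix has determinant
`(1 - ‖p‖²) / 4`, and a Hermitian `2 × 2` matrix is positive semidefinite exactly when its trace and
determinant (the sum and product of its two real eigenvalues) are nonnegative. So the
positive semidefinite ones correspond exactly to the closed unit ball.
-/

open scoped ComplexOrder

open Complex Matrix

theorem Matrix.IsHermitian.posSemidef_fin_two_iff {𝕜 : Type*} [RCLike 𝕜]
    {A : Matrix (Fin 2) (Fin 2) 𝕜} (hA : A.IsHermitian) :
    A.PosSemidef ↔ 0 ≤ RCLike.re A.trace ∧ 0 ≤ RCLike.re A.det := by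
  rw [hA.posSemidef_iff_eigenvalues_nonneg, hA.trace_eq_sum_eigenvalues,
    hA.det_eq_prod_eigenvalues, Fin.sum_univ_two, Fin.prod_univ_two, ← RCLike.ofReal_add,
    ← RCLike.ofReal_mul, RCLike.ofReal_re, RCLike.ofReal_re]
  simp only [Pi.le_def, Fin.forall_fin_two, Pi.zero_apply]
  constructor
  · rintro ⟨h₀, h₁⟩
    exact ⟨add_nonneg h₀ h₁, mul_nonneg h₀ h₁⟩
  · rintro ⟨hsum, hprod⟩
    constructor <;> nlinarith [sq_nonneg (hA.eigenvalues 0), sq_nonneg (hA.eigenvalues 1)]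

noncomputable def blochMat (p : EuclideanSpace ℝ (Fin 3)) : Matrix (Fin 2) (Fin 2) ℂ :=
  (1 / 2 : ℂ) • !![(1 + p 2 : ℂ), p 0 + p 1 * I; p 0 - p 1 * I, 1 - p 2]

noncomputable def blochCoord (A : Matrix (Fin 2) (Fin 2) ℂ) : EuclideanSpace ℝ (Fin 3) :=
  !₂[2 * (A 0 1).re, 2 * (A 0 1).im, (A 0 0 - A 1 1).re]

lemma blochMat_isHermitian (p : EuclideanSpace ℝ (Fin 3)) : (blochMat p).IsHermitian := by
  ext i j
  fin_cases i <;> fin_cases j <;> simp [blochMat, Complex.ext_iff]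

lemma trace_blochMat (p : EuclideanSpace ℝ (Fin 3)) : (blochMat p).trace = 1 := by
  norm_num [blochMat, trace_fin_two]
  ring

lemma det_blochMat (p : EuclideanSpace ℝ (Fin 3)) : (blochMat p).det = ((1 - ‖p‖ ^ 2) / 4 : ℝ) := by
  rw [EuclideanSpace.real_norm_sq_eq, Fin.sum_univ_three]
  push_cast
  simp [blochMat, det_fin_two]
  linear_combination ((p 1 : ℂ) ^ 2 / 4) * I_sq

lemma posSemidef_blochMat_iff (p : EuclideanSpace ℝ (Fin 3)) :
    (blochMat p).PosSemidef ↔ ‖p‖ ≤ 1 := by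
  rw [(blochMat_isHermitian p).posSemidef_fin_two_iff, trace_blochMat, det_blochMat,
    RCLike.one_re, RCLike.re_to_complex, ofReal_re, and_iff_right zero_le_one,
    ← sq_le_one_iff₀ (norm_nonneg p)]
  constructor <;> intro h <;> linarith

lemma blochCoord_blochMat (p : EuclideanSpace ℝ (Fin 3)) : blochCoord (blochMat p) = p := by
  ext i
  fin_cases i <;> simp [blochCoord, blochMat, ← mul_sub, ← two_mul]

lemma blochMat_blochCoord {A : Matrix (Fin 2) (Fin 2) ℂ} (hA : A.IsHermitian)
    (ht : A.trace = 1) : blochMat (blochCoord A) = A := by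
  have h00 : (A 0 0).im = 0 := conj_eq_iff_im.mp (hA.apply 0 0)
  have h11 : (A 1 1).im = 0 := conj_eq_iff_im.mp (hA.apply 1 1)
  have h10 : A 1 0 = starRingEnd ℂ (A 0 1) := (hA.apply 1 0).symm
  have hre : (A 0 0).re + (A 1 1).re = 1 := by
    rw [trace_fin_two] at ht
    simpa using congrArg re ht
  ext i j
  fin_cases i <;> fin_cases j <;> simp [blochCoord, blochMat, Complex.ext_iff, h00, h11, h10] <;>
    linarith

@[fun_prop]
lemma continuous_blochMat : Continuous blochMat := by
  unfold blochMat
  fun_prop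

@[fun_prop]
lemma continuous_blochCoord : Continuous blochCoord := by
  unfold blochCoord
  fun_prop

/-- The set of complex Hermitian positive semidefinite `2×2` matrices of trace `1`
(with the subspace topology from the space of `2×2` complex matrices) is homeomorphic
to the closed unit ball in the Euclidean space `ℝ³`. -/
theorem trace_one_psd_hermitian_homeomorph_ball :
    Nonempty
      ({A : Matrix (Fin 2) (Fin 2) ℂ // A.IsHermitian ∧ A.PosSemidef ∧ A.trace = 1} ≃ₜ
        (Metric.closedBall (0 : EuclideanSpace ℝ (Fin 3)) 1)) := by
  have norm_blochCoord_le {A : Matrix (Fin 2) (Fin 2) ℂ}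
      (hA : A.IsHermitian ∧ A.PosSemidef ∧ A.trace = 1) : ‖blochCoord A‖ ≤ 1 := by
    rw [← posSemidef_blochMat_iff, blochMat_blochCoord hA.1 hA.2.2]
    exact hA.2.1
  refine ⟨{
    toFun A := ⟨blochCoord A, mem_closedBall_zero_iff.mpr (norm_blochCoord_le A.2)⟩
    invFun p := ⟨blochMat p, blochMat_isHermitian p,
      (posSemidef_blochMat_iff p).mpr (mem_closedBall_zero_iff.mp p.2), trace_blochMat p⟩
    left_inv A := Subtype.ext (blochMat_blochCoord A.2.1 A.2.2.2)
    right_inv p := Subtype.ext (blochCoord_blochMat p)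
    continuous_toFun := by fun_prop
    continuous_invFun := by fun_prop }⟩
end

section
/- For every 2×2 real matrix g with det g = 1, let a(x) denote the positive semidefinite square root of (g·n(x))ᵀ(g·n(x)) where n(x) = [[1,x],[0,1]], let b(x) = a(x)/tr(a(x)), and let k(x) = g·n(x)·a(x)⁻¹ be the rotation factor of the polar decomposition of g·n(x). Then: (i) b(x) converges to the projection [[0,0],[0,1]] both as x → +∞ and as x → −∞; (ii) there exists k∞ ∈ SO(2) such that k(x) → k∞ as x → −∞ and k(x) → −k∞ as x → +∞. Thus the closure of each right N₊-orbit meets the boundary of the compactification in exactly two antipodal points ±k∞ paired with the fixed projection q₁(N₊) = [[0,0],[0,1]]. -/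
/-!
For `0 < det M`, the identity `(MᵀM + det M • 1)² = (tr (MᵀM) + 2 det M) • MᵀM` gives the positive
square root of `MᵀM` in closed form, `(MᵀM + det M • 1) / √(tr (MᵀM) + 2 det M)`, and with it the
rotation factor `M * √(MᵀM)⁻¹ = (M + adj Mᵀ) / √(tr (MᵀM) + 2 det M)`. The trace-normalised
positive factor is invariant under `M ↦ t • M`, and the rotation factor is multiplied by the sign
of `t`. Writing `g * n(x) = x • (x⁻¹ • g + g * E)` with `E = [[0,1],[0,0]]`, both factors along the
orbit are therefore, up to the sign of `x`, their values at `x⁻¹ • g + g * E → g * E` as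
`x → ±∞`. The closed forms stay continuous at the rank-one matrix `g * E`, because there
`tr + 2 det = g₀₀² + g₁₀² > 0`.
-/

open Matrix Filter Topology

namespace Matrix

section CommRing

variable {R : Type*} [CommRing R] (M : Matrix (Fin 2) (Fin 2) R)

theorem transpose_mul_self_add_det_smul_mul_self :
    (Mᵀ * M + M.det • 1) * (Mᵀ * M + M.det • 1) = (trace (Mᵀ * M) + 2 * M.det) • (Mᵀ * M) := by
  ext i j; fin_cases i <;> fin_cases j <;> simp [mul_apply, trace_fin_two, det_fin_two] <;> ring

theorem add_adjugate_transpose_mul :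
    (M + Mᵀ.adjugate) * (Mᵀ * M + M.det • 1) = (trace (Mᵀ * M) + 2 * M.det) • M := by
  ext i j; fin_cases i <;> fin_cases j <;>
    simp [mul_apply, trace_fin_two, det_fin_two, adjugate_fin_two] <;> ring

theorem transpose_add_adjugate_transpose_mul_self :
    (M + Mᵀ.adjugate)ᵀ * (M + Mᵀ.adjugate) = (trace (Mᵀ * M) + 2 * M.det) • 1 := by
  ext i j; fin_cases i <;> fin_cases j <;>
    simp [mul_apply, trace_fin_two, det_fin_two, adjugate_fin_two] <;> ring

theorem det_add_adjugate_transpose :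
    (M + Mᵀ.adjugate).det = trace (Mᵀ * M) + 2 * M.det := by
  simp [mul_apply, trace_fin_two, det_fin_two, adjugate_fin_two]; ring

end CommRing

noncomputable def normalizedPosPart (M : Matrix (Fin 2) (Fin 2) ℝ) : Matrix (Fin 2) (Fin 2) ℝ :=
  (trace (Mᵀ * M) + 2 * M.det)⁻¹ • (Mᵀ * M + M.det • 1)

noncomputable def polarRotation (M : Matrix (Fin 2) (Fin 2) ℝ) : Matrix (Fin 2) (Fin 2) ℝ :=
  (√(trace (Mᵀ * M) + 2 * M.det))⁻¹ • (M + Mᵀ.adjugate)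

section Polar

variable {M A : Matrix (Fin 2) (Fin 2) ℝ}

theorem trace_transpose_mul_self_add_two_mul_det_pos (hM : 0 < M.det) :
    0 < trace (Mᵀ * M) + 2 * M.det := by
  have := (posSemidef_conjTranspose_mul_self M).trace_nonneg
  rw [conjTranspose_eq_transpose_of_trivial] at this
  linarith

open scoped MatrixOrder in
theorem PosSemidef.eq_smul_transpose_mul_self_add (hM : 0 < M.det) (hA : A.PosSemidef)
    (hAM : A * A = Mᵀ * M) :
    A = (√(trace (Mᵀ * M) + 2 * M.det))⁻¹ • (Mᵀ * M + M.det • 1) := by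
  have hpos := trace_transpose_mul_self_add_two_mul_det_pos hM
  have hB : ((√(trace (Mᵀ * M) + 2 * M.det))⁻¹ • (Mᵀ * M + M.det • 1)).PosSemidef :=
    ((posSemidef_conjTranspose_mul_self M).add (PosSemidef.one.smul hM.le)).smul (by positivity)
  refine (CFC.mul_self_eq_mul_self_iff A _ hA.nonneg hB.nonneg).1 ?_
  rw [hAM, smul_mul_smul_comm, transpose_mul_self_add_det_smul_mul_self, smul_smul, ← mul_inv,
    Real.mul_self_sqrt hpos.le, inv_mul_cancel₀ hpos.ne', one_smul]

theorem PosSemidef.trace_inv_smul_eq_normalizedPosPart (hM : 0 < M.det) (hA : A.PosSemidef)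
    (hAM : A * A = Mᵀ * M) : (A.trace)⁻¹ • A = normalizedPosPart M := by
  have hpos := trace_transpose_mul_self_add_two_mul_det_pos hM
  have htr : trace (Mᵀ * M + M.det • 1) = trace (Mᵀ * M) + 2 * M.det := by
    simp [trace_add, mul_comm]
  rw [hA.eq_smul_transpose_mul_self_add hM hAM, trace_smul, htr, smul_eq_mul, smul_smul,
    normalizedPosPart]
  congr 1
  have := Real.sqrt_pos.2 hpos
  rw [← Real.mul_self_sqrt hpos.le]
  field_simp

theorem PosSemidef.mul_inv_eq_polarRotation (hM : 0 < M.det) (hA : A.PosSemidef)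
    (hAM : A * A = Mᵀ * M) : M * A⁻¹ = polarRotation M := by
  have hpos := trace_transpose_mul_self_add_two_mul_det_pos hM
  have hdetA : IsUnit A.det := by
    refine isUnit_iff_ne_zero.2 fun h => hM.ne' ?_
    have := congrArg det hAM
    rw [det_mul, det_mul, det_transpose, h, mul_zero] at this
    exact zero_eq_mul_self.1 this
  have hKA : polarRotation M * A = M := by
    rw [hA.eq_smul_transpose_mul_self_add hM hAM, polarRotation, smul_mul_smul_comm,
      add_adjugate_transpose_mul, smul_smul, ← mul_inv, Real.mul_self_sqrt hpos.le,
      inv_mul_cancel₀ hpos.ne', one_smul]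
  nth_rewrite 1 [← hKA]
  exact mul_nonsing_inv_cancel_right _ _ hdetA

theorem transpose_polarRotation_mul_self (h : 0 < trace (Mᵀ * M) + 2 * M.det) :
    (polarRotation M)ᵀ * polarRotation M = 1 := by
  rw [polarRotation, transpose_smul, smul_mul_smul_comm, transpose_add_adjugate_transpose_mul_self,
    smul_smul, ← mul_inv, Real.mul_self_sqrt h.le, inv_mul_cancel₀ h.ne', one_smul]

theorem det_polarRotation (h : 0 < trace (Mᵀ * M) + 2 * M.det) :
    (polarRotation M).det = 1 := by
  rw [polarRotation, det_smul, det_add_adjugate_transpose, Fintype.card_fin, inv_pow,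
    Real.sq_sqrt h.le, inv_mul_cancel₀ h.ne']

theorem normalizedPosPart_smul {t : ℝ} (ht : t ≠ 0) :
    normalizedPosPart (t • M) = normalizedPosPart M := by
  have hd : (t • M).det = t ^ 2 * M.det := by simp
  simp only [normalizedPosPart, hd, transpose_smul, smul_mul_smul_comm, trace_smul, smul_eq_mul]
  rw [show t * t * trace (Mᵀ * M) + 2 * (t ^ 2 * M.det) = t ^ 2 * (trace (Mᵀ * M) + 2 * M.det) by
      ring, show (t * t) • (Mᵀ * M) + (t ^ 2 * M.det) • 1 = t ^ 2 • (Mᵀ * M + M.det • 1) by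
      rw [smul_add, smul_smul, sq]]
  rw [smul_smul, mul_inv, mul_right_comm, inv_mul_cancel₀ (pow_ne_zero 2 ht), one_mul]

theorem polarRotation_smul (t : ℝ) : polarRotation (t • M) = (t / |t|) • polarRotation M := by
  have hd : (t • M).det = t ^ 2 * M.det := by simp
  simp only [polarRotation, hd, transpose_smul, smul_mul_smul_comm, trace_smul, smul_eq_mul,
    adjugate_smul, Fintype.card_fin]
  rw [show t * t * trace (Mᵀ * M) + 2 * (t ^ 2 * M.det) = t ^ 2 * (trace (Mᵀ * M) + 2 * M.det) by
      ring, Real.sqrt_mul (sq_nonneg t), Real.sqrt_sq_eq_abs, pow_one, ← smul_add, smul_smul,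
      smul_smul, mul_inv]
  ring_nf

theorem continuousAt_normalizedPosPart (h : trace (Mᵀ * M) + 2 * M.det ≠ 0) :
    ContinuousAt normalizedPosPart M := by
  unfold normalizedPosPart
  fun_prop (disch := assumption)

theorem continuousAt_polarRotation (h : 0 < trace (Mᵀ * M) + 2 * M.det) :
    ContinuousAt polarRotation M := by
  unfold polarRotation
  fun_prop (disch := positivity)

end Polar

section UnipotentOrbit

variable (g : Matrix (Fin 2) (Fin 2) ℝ)

theorem mul_unipotent_eq_smul {x : ℝ} (hx : x ≠ 0) :
    g * !![1, x; 0, 1] = x • (x⁻¹ • g + g * !![0, 1; 0, 0]) := by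
  rw [smul_add, smul_smul, mul_inv_cancel₀ hx, one_smul]
  ext i j; fin_cases i <;> fin_cases j <;> simp [mul_apply] <;> ring

theorem tendsto_inv_smul_add {l : Filter ℝ} (hl : Tendsto (·⁻¹) l (𝓝 0)) :
    Tendsto (fun x : ℝ => x⁻¹ • g + g * !![0, 1; 0, 0]) l (𝓝 (g * !![0, 1; 0, 0])) := by
  simpa using (hl.smul_const g).add_const (g * !![0, 1; 0, 0])

theorem trace_transpose_mul_self_add_two_mul_det_mul_strictUpper :
    trace ((g * !![0, 1; 0, 0])ᵀ * (g * !![0, 1; 0, 0])) + 2 * (g * !![0, 1; 0, 0]).det =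
      g 0 0 ^ 2 + g 1 0 ^ 2 := by
  simp [mul_apply, trace_fin_two, det_fin_two]; ring

theorem normalizedPosPart_mul_strictUpper (h : g 0 0 ^ 2 + g 1 0 ^ 2 ≠ 0) :
    normalizedPosPart (g * !![0, 1; 0, 0]) = !![0, 0; 0, 1] := by
  rw [normalizedPosPart, trace_transpose_mul_self_add_two_mul_det_mul_strictUpper]
  ext i j; fin_cases i <;> fin_cases j <;> simp [mul_apply, det_fin_two]; field_simp

theorem tendsto_normalizedPosPart_mul_unipotent {l : Filter ℝ} (hl : Tendsto (·⁻¹) l (𝓝 0))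
    (hl0 : ∀ᶠ x in l, x ≠ 0) (h : g 0 0 ^ 2 + g 1 0 ^ 2 ≠ 0) :
    Tendsto (fun x => normalizedPosPart (g * !![1, x; 0, 1])) l (𝓝 !![0, 0; 0, 1]) := by
  have hN := trace_transpose_mul_self_add_two_mul_det_mul_strictUpper g
  rw [← normalizedPosPart_mul_strictUpper g h]
  refine ((continuousAt_normalizedPosPart (hN ▸ h)).tendsto.comp
    (tendsto_inv_smul_add g hl)).congr' ?_
  filter_upwards [hl0] with x hx
  rw [Function.comp_apply, mul_unipotent_eq_smul g hx, normalizedPosPart_smul hx]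

theorem tendsto_polarRotation_mul_unipotent {l : Filter ℝ} (hl : Tendsto (·⁻¹) l (𝓝 0))
    {ε : ℝ} (hε : ∀ᶠ x in l, x ≠ 0 ∧ x / |x| = ε) (h : g 0 0 ^ 2 + g 1 0 ^ 2 ≠ 0) :
    Tendsto (fun x => polarRotation (g * !![1, x; 0, 1])) l
      (𝓝 (ε • polarRotation (g * !![0, 1; 0, 0]))) := by
  have hN := trace_transpose_mul_self_add_two_mul_det_mul_strictUpper g
  refine (((continuousAt_polarRotation (hN ▸ h.lt_of_le' (by positivity))).tendsto.comp
    (tendsto_inv_smul_add g hl)).const_smul ε).congr' ?_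
  filter_upwards [hε] with x ⟨hx, hsign⟩
  rw [Function.comp_apply, mul_unipotent_eq_smul g hx, polarRotation_smul, hsign]

end UnipotentOrbit

end Matrix

/-- For `g ∈ SL(2,ℝ)` let `g·n(x) = k(x)·a(x)` be the polar decomposition, where
`n(x) = [[1,x],[0,1]]`, `a(x)` is the positive semidefinite square root of
`(g·n(x))ᵀ(g·n(x))` and `k(x) = g·n(x)·a(x)⁻¹`, and let `b(x) = (tr a(x))⁻¹ • a(x)`.
Then `b(x) → [[0,0],[0,1]]` as `x → ±∞`, and there is `k∞ ∈ SO(2)` with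
`k(x) → k∞` as `x → −∞` and `k(x) → −k∞` as `x → +∞`. -/
theorem unipotent_orbit_limits (g : Matrix (Fin 2) (Fin 2) ℝ) (hg : g.det = 1)
    (a : ℝ → Matrix (Fin 2) (Fin 2) ℝ)
    (ha : ∀ x : ℝ, (a x).PosSemidef ∧
      a x * a x = (g * !![1, x; 0, 1])ᵀ * (g * !![1, x; 0, 1]))
    (b : ℝ → Matrix (Fin 2) (Fin 2) ℝ)
    (hb : ∀ x : ℝ, b x = ((a x).trace)⁻¹ • a x)
    (k : ℝ → Matrix (Fin 2) (Fin 2) ℝ)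
    (hk : ∀ x : ℝ, k x = g * !![1, x; 0, 1] * (a x)⁻¹) :
    Tendsto b atTop (𝓝 !![(0:ℝ), 0; 0, 1]) ∧
    Tendsto b atBot (𝓝 !![(0:ℝ), 0; 0, 1]) ∧
    ∃ kinf : Matrix (Fin 2) (Fin 2) ℝ, (kinfᵀ * kinf = 1 ∧ kinf.det = 1) ∧
      Tendsto k atBot (𝓝 kinf) ∧ Tendsto k atTop (𝓝 (-kinf)) := by
  have hdet (x : ℝ) : 0 < (g * !![1, x; 0, 1]).det := by simp [hg]
  have hb' : b = fun x => normalizedPosPart (g * !![1, x; 0, 1]) :=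
    funext fun x => (hb x).trans <| (ha x).1.trace_inv_smul_eq_normalizedPosPart (hdet x) (ha x).2
  have hk' : k = fun x => polarRotation (g * !![1, x; 0, 1]) :=
    funext fun x => (hk x).trans <| (ha x).1.mul_inv_eq_polarRotation (hdet x) (ha x).2
  have hcol : g 0 0 ^ 2 + g 1 0 ^ 2 ≠ 0 := by
    intro h
    have h00 : g 0 0 = 0 := by nlinarith [sq_nonneg (g 0 0), sq_nonneg (g 1 0)]
    have h10 : g 1 0 = 0 := by nlinarith [sq_nonneg (g 0 0), sq_nonneg (g 1 0)]
    simp [det_fin_two, h00, h10] at hg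
  have hN : 0 < trace ((g * !![0, 1; 0, 0])ᵀ * (g * !![0, 1; 0, 0])) +
      2 * (g * !![0, 1; 0, 0]).det := by
    rw [trace_transpose_mul_self_add_two_mul_det_mul_strictUpper]
    positivity
  subst hb' hk'
  refine ⟨tendsto_normalizedPosPart_mul_unipotent g tendsto_inv_atTop_zero
      (eventually_ne_atTop 0) hcol,
    tendsto_normalizedPosPart_mul_unipotent g tendsto_inv_atBot_zero (eventually_ne_atBot 0) hcol,
    -polarRotation (g * !![0, 1; 0, 0]), ?_, ?_, ?_⟩
  · simp [transpose_polarRotation_mul_self hN, det_neg, det_polarRotation hN]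
  · simpa using tendsto_polarRotation_mul_unipotent g tendsto_inv_atBot_zero (ε := -1)
      ((eventually_lt_atBot 0).mono fun x hx => ⟨hx.ne, by simp [abs_of_neg hx, hx.ne]⟩) hcol
  · simpa using tendsto_polarRotation_mul_unipotent g tendsto_inv_atTop_zero (ε := 1)
      ((eventually_gt_atTop 0).mono fun x hx => ⟨hx.ne', by simp [abs_of_pos hx, hx.ne']⟩) hcol
end

section
/- Let f : SL(2,ℝ) → ℝ be continuous and satisfy the Harish-Chandra-type decay bound |f(h)| ≤ C · ‖h‖^{-1} · (2 + log(1 + ‖h‖))^{-3} for all h with det h = 1, where ‖·‖ is the Frobenius norm on 2×2 real matrices. Then for every g ∈ SL(2,ℝ) the function x ↦ f(g·[[1,x],[0,1]]) is integrable on ℝ, i.e. the average of f over the right orbit of the unipotent subgroup N₊ converges absolutely. -/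
/-!
Since the Frobenius norm is submultiplicative, `|x| ≤ ‖n(x)‖ ≤ ‖g⁻¹‖ ‖g n(x)‖`, so `‖g n(x)‖`
grows at least linearly in `|x|`. On `SL(2,ℝ)` we have `‖h‖² ≥ 2 det h = 2`, so `‖h‖⁻¹` may be
replaced by `2 (1 + ‖h‖)⁻¹`. Hence `|f(g n(x))|` is dominated by a multiple of
`((1 + t) (2 + log (1 + t))³)⁻¹` at `t = |x| / ‖g⁻¹‖`, which is integrable because
`-(2 + log (1 + t))⁻² / 2` is an antiderivative tending to `0`.
-/

open Matrix

/-- The Frobenius norm of a real `2×2` matrix. -/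
noncomputable def frobNorm (A : Matrix (Fin 2) (Fin 2) ℝ) : ℝ :=
  Real.sqrt (∑ i : Fin 2, ∑ j : Fin 2, (A i j) ^ 2)

open Set MeasureTheory Filter Real

section Frobenius

attribute [local instance] Matrix.frobeniusNormedAddCommGroup

theorem frobNorm_eq_norm (A : Matrix (Fin 2) (Fin 2) ℝ) : frobNorm A = ‖A‖ := by
  simp [frobNorm, frobenius_norm_def, Real.sqrt_eq_rpow]

theorem frobNorm_mul_le (A B : Matrix (Fin 2) (Fin 2) ℝ) :
    frobNorm (A * B) ≤ frobNorm A * frobNorm B := by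
  simpa only [frobNorm_eq_norm] using frobenius_norm_mul A B

end Frobenius

theorem frobNorm_le_frobNorm_inv_mul_frobNorm_mul {A : Matrix (Fin 2) (Fin 2) ℝ}
    (hA : IsUnit A.det) (B : Matrix (Fin 2) (Fin 2) ℝ) :
    frobNorm B ≤ frobNorm A⁻¹ * frobNorm (A * B) := by
  simpa [← Matrix.mul_assoc, nonsing_inv_mul A hA] using frobNorm_mul_le A⁻¹ (A * B)

theorem one_le_frobNorm_of_det_eq_one {A : Matrix (Fin 2) (Fin 2) ℝ} (hA : A.det = 1) :
    1 ≤ frobNorm A := by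
  rw [det_fin_two] at hA
  refine one_le_sqrt.2 ?_
  simp only [Fin.sum_univ_two]
  nlinarith [sq_nonneg (A 0 0 - A 1 1), sq_nonneg (A 0 1 + A 1 0)]

theorem abs_le_frobNorm_unipotent (x : ℝ) : |x| ≤ frobNorm !![1, x; 0, 1] := by
  refine abs_le_sqrt ?_
  simp only [Fin.sum_univ_two, of_apply, cons_val', cons_val_zero, cons_val_one, empty_val',
    cons_val_fin_one]
  nlinarith

theorem inv_le_two_mul_inv_one_add {y : ℝ} (hy : 1 ≤ y) : y⁻¹ ≤ 2 * (1 + y)⁻¹ := by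
  rw [← div_eq_mul_inv, inv_eq_one_div, div_le_div_iff₀ (by linarith) (by linarith)]
  linarith

theorem add_log_one_add_pos {c t : ℝ} (hc : 0 < c) (ht : 0 ≤ t) : 0 < c + log (1 + t) := by
  have := log_nonneg (by linarith : (1 : ℝ) ≤ 1 + t)
  linarith

noncomputable def logWeight (c p t : ℝ) : ℝ :=
  ((1 + t) * (c + log (1 + t)) ^ p)⁻¹

section LogWeight

variable {c p : ℝ}

theorem antitoneOn_logWeight (hc : 0 < c) (hp : 0 ≤ p) : AntitoneOn (logWeight c p) (Ici 0) := by
  intro s hs t ht hst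
  have hlog := add_log_one_add_pos hc hs.out
  refine inv_anti₀ (mul_pos (by linarith [hs.out]) (rpow_pos_of_pos hlog p)) ?_
  have hlog_le : c + log (1 + s) ≤ c + log (1 + t) := by
    gcongr
    linarith [hs.out]
  gcongr
  linarith [ht.out]

theorem integrableOn_Ioi_logWeight (hc : 0 < c) (hp : 1 < p) :
    IntegrableOn (logWeight c p) (Ioi 0) := by
  refine integrableOn_Ioi_deriv_of_nonneg'
    (g := fun t => -(p - 1)⁻¹ * (c + log (1 + t)) ^ (1 - p)) (l := 0) (fun t ht => ?_)
    (fun t ht => ?_) ?_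
  · have hlog := add_log_one_add_pos hc ht.out
    have h1t : (1 : ℝ) + t ≠ 0 := by linarith [ht.out]
    have hderiv := ((((hasDerivAt_id t).const_add 1).log h1t).const_add c).rpow_const
      (p := 1 - p) (Or.inl hlog.ne')
    refine (hderiv.const_mul (-(p - 1)⁻¹)).congr_deriv ?_
    have hp1 : p - 1 ≠ 0 := (sub_pos.2 hp).ne'
    rw [id, show 1 - p - 1 = -p by ring, rpow_neg hlog.le, logWeight]
    field_simp
    ring
  · have := add_log_one_add_pos hc ht.out.le
    have : 0 ≤ t := ht.out.le
    unfold logWeight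
    positivity
  · have hlog : Tendsto (fun t : ℝ => c + log (1 + t)) atTop atTop :=
      tendsto_atTop_add_const_left _ _
        (tendsto_log_atTop.comp (tendsto_atTop_add_const_left _ _ tendsto_id))
    simpa using
      ((tendsto_rpow_neg_atTop (by linarith : 0 < p - 1)).comp hlog).const_mul (-(p - 1)⁻¹)

theorem integrable_comp_abs_of_integrableOn_Ioi {E : Type*} [NormedAddCommGroup E] {φ : ℝ → E}
    (h : IntegrableOn φ (Ioi 0)) : Integrable fun x => φ |x| := by
  have hIoi : IntegrableOn (fun x => φ |x|) (Ioi 0) :=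
    h.congr_fun (fun x hx => by rw [abs_of_pos hx]) measurableSet_Ioi
  have hIio : IntegrableOn (fun x => φ |x|) (Iio 0) := by
    refine (show IntegrableOn φ (Ioi (-0)) by rwa [neg_zero]).comp_neg_Iio.congr_fun
      (fun x hx => ?_) measurableSet_Iio
    rw [abs_of_neg hx]
  rw [← integrableOn_univ, ← Iio_union_Ici]
  exact hIio.union ((integrableOn_Ici_iff_integrableOn_Ioi enorm_ne_top).2 hIoi)

theorem integrable_logWeight_abs (hc : 0 < c) (hp : 1 < p) :
    Integrable fun x => logWeight c p |x| :=
  integrable_comp_abs_of_integrableOn_Ioi (integrableOn_Ioi_logWeight hc hp)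

end LogWeight

theorem decay_le_two_mul_logWeight {C y u : ℝ} (hC : 0 ≤ C) (hu : 0 ≤ u) (huy : u ≤ y)
    (hy : 1 ≤ y) : C * y⁻¹ * ((2 + log (1 + y)) ^ 3)⁻¹ ≤ 2 * C * logWeight 2 3 u := by
  have hlog := add_log_one_add_pos two_pos (zero_le_one.trans hy)
  calc C * y⁻¹ * ((2 + log (1 + y)) ^ 3)⁻¹
      ≤ C * (2 * (1 + y)⁻¹) * ((2 + log (1 + y)) ^ 3)⁻¹ := by
        gcongr
        exact inv_le_two_mul_inv_one_add hy
    _ = 2 * C * logWeight 2 3 y := by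
        rw [logWeight, show (3 : ℝ) = (3 : ℕ) by norm_num, rpow_natCast, mul_inv]
        ring
    _ ≤ 2 * C * logWeight 2 3 u := by
        gcongr
        exact antitoneOn_logWeight two_pos (by norm_num) hu (hu.trans huy) huy

/-- If `f` is continuous on `SL(2,ℝ)` and satisfies the Harish-Chandra type decay bound
`|f(h)| ≤ C ‖h‖⁻¹ (2 + log(1+‖h‖))⁻³`, then for every `g ∈ SL(2,ℝ)` the function
`x ↦ f(g·n(x))` is integrable on `ℝ`, i.e. the average over the right `N₊`-orbit
converges absolutely. -/
theorem unipotent_average_integrable (f : Matrix (Fin 2) (Fin 2) ℝ → ℝ)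
    (hf : ContinuousOn f {h : Matrix (Fin 2) (Fin 2) ℝ | h.det = 1})
    (C : ℝ)
    (hbound : ∀ h : Matrix (Fin 2) (Fin 2) ℝ, h.det = 1 →
      |f h| ≤ C * (frobNorm h)⁻¹ * ((2 + Real.log (1 + frobNorm h)) ^ 3)⁻¹)
    (g : Matrix (Fin 2) (Fin 2) ℝ) (hg : g.det = 1) :
    MeasureTheory.Integrable (fun x : ℝ => f (g * !![1, x; 0, 1])) := by
  have hdet : ∀ x : ℝ, (g * !![1, x; 0, 1]).det = 1 := fun x => by
    simp [det_fin_two_of, hg]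
  have hK : 1 ≤ frobNorm g⁻¹ := one_le_frobNorm_of_det_eq_one (by simp [hg])
  have hC : 0 ≤ C := by
    have hone := one_le_frobNorm_of_det_eq_one (det_one (n := Fin 2) (R := ℝ))
    have hpos : 0 < (frobNorm 1)⁻¹ * ((2 + log (1 + frobNorm 1)) ^ 3)⁻¹ := by
      have := add_log_one_add_pos two_pos (zero_le_one.trans hone)
      positivity
    refine nonneg_of_mul_nonneg_left ?_ hpos
    simpa only [mul_assoc] using (abs_nonneg _).trans (hbound 1 det_one)
  have hcont : Continuous fun x : ℝ => f (g * !![1, x; 0, 1]) :=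
    hf.comp_continuous (by fun_prop) hdet
  refine (((integrable_logWeight_abs two_pos (by norm_num : (1 : ℝ) < 3)).comp_div
    (by linarith : frobNorm g⁻¹ ≠ 0)).const_mul (2 * C)).mono' hcont.aestronglyMeasurable
    (ae_of_all _ fun x => ?_)
  have hgrowth : |x| / frobNorm g⁻¹ ≤ frobNorm (g * !![1, x; 0, 1]) := by
    rw [div_le_iff₀' (by linarith)]
    exact (abs_le_frobNorm_unipotent x).trans
      (frobNorm_le_frobNorm_inv_mul_frobNorm_mul (by simp [hg]) _)
  rw [norm_eq_abs, abs_div, abs_of_pos (by linarith : 0 < frobNorm g⁻¹)]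
  exact (hbound _ (hdet x)).trans (decay_le_two_mul_logWeight hC (by positivity) hgrowth
    (one_le_frobNorm_of_det_eq_one (hdet x)))
end
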